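/- arXiv:1709.06621 — 3 statements merged into one kernel-verified Lean document; each statement's English description precedes it below -/
import Mathlib

section
/- For any μ > 0 and α ∈ ℝ there is a constant C (depending on μ and α) such that for all n ∈ ℕ, ∑_{m=0}^∞ (max(m,1))^α · exp(-μ·|√m − √n|) ≤ C · (max(n,1))^{α + 1/2}. -/
/-!
Write `d = |√m - √n|` and `N = max n 1`. Since `|max (√m) 1 - max (√n) 1| ≤ d`, the ratio of
`max m 1` and `N` lies between `(1 + d)⁻²` and `(1 + d)²`, and `1 + d ≤ ε⁻¹ exp (ε d)` for
`0 < ε ≤ 1`; with `ε` small, half of the exponential decay absorbs the weight: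
`max m 1 ^ α ≤ K N ^ α exp (μ d / 2)`. It remains to show `∑ₘ exp (-ν d) = O(√N)`.
From `|m - n| = d (√m + √n) ≤ d (2√N + d)` we get `d ≥ min (|m - n| / (4√N)) (√|m - n| / 2)`,
so the sum is at most twice `∑ₖ (exp (-ν k / (4√N)) + exp (-ν √k / 2))`: a geometric series
of size `O(√N / ν)` plus a constant.
-/

open Real Filter

lemma one_add_le_inv_mul_exp {ε : ℝ} (hε0 : 0 < ε) (hε1 : ε ≤ 1) (d : ℝ) :
    1 + d ≤ ε⁻¹ * exp (ε * d) := by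
  rw [le_inv_mul_iff₀ hε0]
  nlinarith [add_one_le_exp (ε * d)]

lemma rpow_le_rpow_mul_rpow_abs {x y T : ℝ} (hx : 0 < x) (hy : 0 < y) (hxy : x ≤ y * T)
    (hyx : y ≤ x * T) (α : ℝ) : x ^ α ≤ y ^ α * T ^ |α| := by
  have hT : 0 < T := pos_of_mul_pos_right (hy.trans_le hyx) hx.le
  rcases le_total 0 α with hα | hα
  · rw [abs_of_nonneg hα, ← mul_rpow hy.le hT.le]
    exact rpow_le_rpow hx.le hxy hα
  · rw [abs_of_nonpos hα, rpow_neg hT.le, ← div_eq_mul_inv, ← div_rpow hy.le hT.le]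
    exact rpow_le_rpow_of_nonpos (div_pos hy hT) ((div_le_iff₀ hT).mpr hyx) hα

lemma sq_max_sqrt_one (x : ℝ) : max (√x) 1 ^ 2 = max x 1 := by
  rw [← sqrt_one, ← sqrt_monotone.map_max, sq_sqrt (le_max_of_le_right zero_le_one), sqrt_one]

lemma max_one_le_mul_sq (x y : ℝ) : max x 1 ≤ max y 1 * (1 + |√x - √y|) ^ 2 := by
  have hab : |max (√x) 1 - max (√y) 1| ≤ |√x - √y| := abs_max_sub_max_le_abs _ _ _
  have hb : 1 ≤ max (√y) 1 := le_max_right _ _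
  have hab' := (abs_le.mp hab).2
  rw [← sq_max_sqrt_one x, ← sq_max_sqrt_one y, ← mul_pow]
  gcongr
  nlinarith [abs_nonneg (√x - √y)]

lemma exists_rpow_max_one_le_mul_exp (α : ℝ) {ν : ℝ} (hν : 0 < ν) :
    ∃ K, 0 < K ∧ ∀ x y : ℝ, max x 1 ^ α ≤ K * max y 1 ^ α * exp (ν * |√x - √y|) := by
  set ε := min 1 (ν / (2 * |α| + 1))
  have hε0 : 0 < ε := lt_min one_pos (by positivity)
  have hεν : 2 * |α| * ε ≤ ν := by
    have := (le_div_iff₀ (by positivity)).mp (min_le_right 1 (ν / (2 * |α| + 1)))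
    nlinarith
  refine ⟨(ε⁻¹ ^ 2) ^ |α|, by positivity, fun x y => ?_⟩
  set d := |√x - √y|
  set T := ε⁻¹ ^ 2 * exp (2 * ε * d)
  have h1d : (1 + d) ^ 2 ≤ T := by
    calc (1 + d) ^ 2 ≤ (ε⁻¹ * exp (ε * d)) ^ 2 :=
          pow_le_pow_left₀ (by positivity) (one_add_le_inv_mul_exp hε0 (min_le_left _ _) d) 2
      _ = T := by rw [mul_pow, ← exp_nat_mul, Nat.cast_two, ← mul_assoc]
  have hxy : max x 1 ≤ max y 1 * T :=
    (max_one_le_mul_sq x y).trans (by gcongr)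
  have hyx : max y 1 ≤ max x 1 * T := by
    refine (max_one_le_mul_sq y x).trans ?_
    rw [abs_sub_comm]
    gcongr
  calc max x 1 ^ α ≤ max y 1 ^ α * T ^ |α| :=
        rpow_le_rpow_mul_rpow_abs (by positivity) (by positivity) hxy hyx α
    _ = (ε⁻¹ ^ 2) ^ |α| * max y 1 ^ α * exp (2 * |α| * ε * d) := by
        rw [mul_rpow (by positivity) (exp_pos _).le, ← exp_mul]; ring_nf
    _ ≤ (ε⁻¹ ^ 2) ^ |α| * max y 1 ^ α * exp (ν * d) := by
        gcongr

lemma summable_exp_neg_mul_sqrt {c : ℝ} (hc : 0 < c) :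
    Summable fun k : ℕ => exp (-c * √k) := by
  have hsqrt : Tendsto (fun k : ℕ => √(k : ℝ)) atTop atTop :=
    tendsto_sqrt_atTop.comp tendsto_natCast_atTop_atTop
  refine summable_of_isBigO_nat (g := fun k : ℕ => (k : ℝ) ^ (-2 : ℝ))
    (summable_nat_rpow.mpr (by norm_num)) ?_
  refine ((isLittleO_exp_neg_mul_rpow_atTop hc (-4)).comp_tendsto hsqrt).isBigO.congr_right
    fun k => ?_
  simp only [Function.comp_apply, sqrt_eq_rpow, ← rpow_mul k.cast_nonneg]
  norm_num

lemma tsum_exp_neg_pow_le {c : ℝ} (hc : 0 < c) : ∑' k : ℕ, exp (-c) ^ k ≤ 1 + c⁻¹ := by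
  rw [tsum_geometric_of_lt_one (exp_pos _).le (exp_lt_one_iff.mpr (by linarith))]
  have hc' : c + 1 ≤ exp c := add_one_le_exp c
  have hgeom : (1 - exp (-c))⁻¹ = 1 + (exp c - 1)⁻¹ := by
    have : exp c - 1 ≠ 0 := by linarith
    rw [exp_neg]
    field_simp
    ring
  rw [hgeom]
  gcongr
  linarith

lemma summable_comp_natAbs {φ : ℕ → ℝ} (hφ : Summable φ) : Summable fun z : ℤ => φ z.natAbs :=
  .of_nat_of_neg (f := fun z : ℤ => φ z.natAbs) (by simpa using hφ) (by simpa using hφ)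

lemma tsum_comp_natAbs {φ : ℕ → ℝ} (hφ : Summable φ) :
    ∑' z : ℤ, φ z.natAbs = 2 * ∑' k, φ k - φ 0 := by
  rw [Summable.tsum_of_nat_of_neg (f := fun z : ℤ => φ z.natAbs) (by simpa using hφ)
    (by simpa using hφ)]
  simp only [Int.natAbs_neg, Int.natAbs_natCast, Int.natAbs_zero]
  ring

lemma summable_comp_natAbs_sub {φ : ℕ → ℝ} (hφ : Summable φ) (n : ℕ) :
    Summable fun m : ℕ => φ ((m : ℤ) - n).natAbs :=
  (summable_comp_natAbs hφ).comp_injective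
    ((sub_left_injective (b := (n : ℤ))).comp Nat.cast_injective)

lemma tsum_comp_natAbs_sub_le {φ : ℕ → ℝ} (hφ0 : ∀ k, 0 ≤ φ k) (hφ : Summable φ) (n : ℕ) :
    ∑' m : ℕ, φ ((m : ℤ) - n).natAbs ≤ 2 * ∑' k, φ k := by
  have := tsum_comp_le_tsum_of_inj (summable_comp_natAbs hφ) (fun z => hφ0 _)
    ((sub_left_injective (b := (n : ℤ))).comp Nat.cast_injective)
  rw [tsum_comp_natAbs hφ] at this
  exact this.trans (sub_le_self _ (hφ0 0))

lemma min_le_abs_sqrt_sub_sqrt {x y s : ℝ} (hx : 0 ≤ x) (hy : 0 ≤ y) (hs0 : 0 < s)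
    (hs : √y ≤ s) : min (|x - y| / (4 * s)) (√|x - y| / 2) ≤ |√x - √y| := by
  set d := |√x - √y|
  have hxy : |x - y| = d * (√x + √y) := by
    rw [← abs_of_nonneg (by positivity : 0 ≤ √x + √y), ← abs_mul]
    congr 1
    nlinarith [sq_sqrt hx, sq_sqrt hy]
  have hsum : √x + √y ≤ 2 * s + d := by
    linarith [le_abs_self (√x - √y)]
  have hd : 0 ≤ d := abs_nonneg _
  rcases le_total d (2 * s) with hds | hds
  · refine (min_le_left _ _).trans ((div_le_iff₀ (by positivity)).mpr ?_)
    rw [hxy]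
    nlinarith
  · refine (min_le_right _ _).trans ((div_le_iff₀ (by positivity)).mpr ?_)
    calc √|x - y| ≤ √((d * 2) ^ 2) := sqrt_le_sqrt (by rw [hxy]; nlinarith)
      _ = d * 2 := sqrt_sq (by positivity)

lemma exp_neg_mul_abs_sqrt_sub_sqrt_le {ν : ℝ} (hν : 0 ≤ ν) (m n : ℕ) :
    exp (-(ν * |√m - √n|)) ≤ exp (-(ν / (4 * √(max (n : ℝ) 1)))) ^ ((m : ℤ) - n).natAbs
      + exp (-(ν / 2) * √(((m : ℤ) - n).natAbs)) := by
  set s := √(max (n : ℝ) 1)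
  set k := ((m : ℤ) - n).natAbs
  have hs : 0 < s := sqrt_pos.mpr (lt_max_of_lt_right one_pos)
  have hk : (k : ℝ) = |(m : ℝ) - n| := by simp [k, Nat.cast_natAbs]
  have hd := min_le_abs_sqrt_sub_sqrt m.cast_nonneg n.cast_nonneg hs
    (sqrt_le_sqrt (le_max_left _ _))
  rw [← hk] at hd
  calc exp (-(ν * |√m - √n|)) ≤ exp (-(ν * min (k / (4 * s)) (√k / 2))) := by
        gcongr
    _ ≤ exp (-(ν * (k / (4 * s)))) + exp (-(ν * (√k / 2))) := by
        rcases min_cases (k / (4 * s)) (√k / 2) with ⟨h, -⟩ | ⟨h, -⟩ <;> rw [h]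
        · exact le_add_of_nonneg_right (exp_pos _).le
        · exact le_add_of_nonneg_left (exp_pos _).le
    _ = _ := by
        rw [← exp_nat_mul]
        ring_nf

lemma exists_tsum_exp_neg_mul_abs_sqrt_sub_sqrt_le {ν : ℝ} (hν : 0 < ν) :
    ∃ C, ∀ n : ℕ, Summable (fun m : ℕ => exp (-(ν * |√m - √n|))) ∧
      ∑' m : ℕ, exp (-(ν * |√m - √n|)) ≤ C * √(max (n : ℝ) 1) := by
  set C₀ := ∑' k : ℕ, exp (-(ν / 2) * √k)
  have hC₀ : Summable fun k : ℕ => exp (-(ν / 2) * √k) := summable_exp_neg_mul_sqrt (by positivity)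
  refine ⟨2 * (1 + 4 / ν + C₀), fun n => ?_⟩
  set s := √(max (n : ℝ) 1)
  have hs : 1 ≤ s := one_le_sqrt.mpr (le_max_right _ _)
  set φ : ℕ → ℝ := fun k => exp (-(ν / (4 * s))) ^ k + exp (-(ν / 2) * √k)
  have hφ0 : ∀ k, 0 ≤ φ k := fun k => by positivity
  have hgeom : Summable fun k : ℕ => exp (-(ν / (4 * s))) ^ k :=
    summable_geometric_of_lt_one (exp_pos _).le (exp_lt_one_iff.mpr (by
      have : 0 < ν / (4 * s) := by positivity
      linarith))
  have hφ : Summable φ := hgeom.add hC₀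
  have hle := exp_neg_mul_abs_sqrt_sub_sqrt_le hν.le (n := n)
  have hsum : Summable fun m : ℕ => exp (-(ν * |√m - √n|)) :=
    .of_nonneg_of_le (fun m => (exp_pos _).le) hle (summable_comp_natAbs_sub hφ n)
  refine ⟨hsum, ?_⟩
  calc ∑' m : ℕ, exp (-(ν * |√m - √n|)) ≤ ∑' m : ℕ, φ ((m : ℤ) - n).natAbs :=
        hsum.tsum_le_tsum hle (summable_comp_natAbs_sub hφ n)
    _ ≤ 2 * ∑' k, φ k := tsum_comp_natAbs_sub_le hφ0 hφ n
    _ ≤ 2 * (1 + 4 * s / ν + C₀) := by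
        rw [hgeom.tsum_add hC₀]
        have := tsum_exp_neg_pow_le (c := ν / (4 * s)) (by positivity)
        rw [inv_div] at this
        linarith
    _ ≤ 2 * (1 + 4 / ν + C₀) * s := by
        have hC₀0 : 0 ≤ C₀ := tsum_nonneg fun k => (exp_pos _).le
        rw [mul_div_right_comm]
        nlinarith

/-- For any μ > 0 and α ∈ ℝ there is a constant C such that for all n,
∑_{m=0}^∞ (max(m,1))^α · exp(-μ·|√m − √n|) ≤ C · (max(n,1))^{α + 1/2}. -/
theorem stmt0 (μ α : ℝ) (hμ : 0 < μ) :
    ∃ C : ℝ, ∀ n : ℕ,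
      (∑' m : ℕ, (max (m : ℝ) 1) ^ α * Real.exp (-μ * |Real.sqrt m - Real.sqrt n|))
        ≤ C * (max (n : ℝ) 1) ^ (α + 1 / 2) := by
  obtain ⟨K, hK, hweight⟩ := exists_rpow_max_one_le_mul_exp α (half_pos hμ)
  obtain ⟨C, hC⟩ := exists_tsum_exp_neg_mul_abs_sqrt_sub_sqrt_le (half_pos hμ)
  refine ⟨K * C, fun n => ?_⟩
  obtain ⟨hsum, hle⟩ := hC n
  set N := max (n : ℝ) 1
  have hterm : ∀ m : ℕ, max (m : ℝ) 1 ^ α * exp (-μ * |√m - √n|)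
      ≤ K * N ^ α * exp (-(μ / 2 * |√m - √n|)) := fun m => by
    calc max (m : ℝ) 1 ^ α * exp (-μ * |√m - √n|)
        ≤ K * N ^ α * exp (μ / 2 * |√m - √n|) * exp (-μ * |√m - √n|) := by
          gcongr
          exact hweight m n
      _ = K * N ^ α * exp (-(μ / 2 * |√m - √n|)) := by rw [mul_assoc, ← exp_add]; ring_nf
  have hN : 0 < N := lt_max_of_lt_right one_pos
  have hsum' : Summable fun m : ℕ => K * N ^ α * exp (-(μ / 2 * |√m - √n|)) := hsum.mul_left _
  calc ∑' m : ℕ, max (m : ℝ) 1 ^ α * exp (-μ * |√m - √n|)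
      ≤ ∑' m : ℕ, K * N ^ α * exp (-(μ / 2 * |√m - √n|)) :=
        (hsum'.of_nonneg_of_le (fun m => by positivity) hterm).tsum_le_tsum hterm hsum'
    _ = K * N ^ α * ∑' m : ℕ, exp (-(μ / 2 * |√m - √n|)) := tsum_mul_left
    _ ≤ K * N ^ α * (C * √N) := by gcongr
    _ = K * C * N ^ (α + 1 / 2) := by rw [rpow_add hN, sqrt_eq_rpow]; ring
end

section
/- For any β ∈ ℂ, μ ∈ ℝ, and n ∈ ℕ: ∑_{m=0}^∞ e^{2μ(m−n)} |⟨m| D(β) |n⟩|² = e^{(e^{2μ}−1)|β|²} · L_n(−|β|²(e^{μ} − e^{−μ})²), where L_n is the n-th Laguerre polynomial L_n(x) = ∑_{k=0}^n (1/k!) · C(n,k) · (−x)^k. -/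
/-- The n-th Laguerre polynomial, L_n(x) = ∑_{k=0}^n (1/k!)·C(n,k)·(−x)^k. -/
noncomputable def laguerre (n : ℕ) (x : ℝ) : ℝ :=
  ∑ k ∈ Finset.range (n + 1), (1 / (Nat.factorial k : ℝ)) * (Nat.choose n k : ℝ) * (-x) ^ k

/-- Matrix elements ⟨m|D(β)|n⟩ of the Glauber displacement operator
D(β) = exp(β b† − β* b) = e^{−|β|²/2} e^{β b†} e^{−β* b} on ℓ²(ℕ), given by the
standard explicit expansion. -/
noncomputable def Dmat (β : ℂ) (m n : ℕ) : ℂ :=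
  Complex.exp (-(((‖β‖ : ℝ) : ℂ) ^ 2) / 2) *
    ∑ k ∈ Finset.range (n + 1),
      if n - k ≤ m then
        ((-(starRingEnd ℂ) β) ^ k / (Nat.factorial k : ℂ)) *
          (β ^ (m - (n - k)) / (Nat.factorial (m - (n - k)) : ℂ)) *
          ((Real.sqrt ((Nat.factorial n : ℝ) * (Nat.factorial m : ℝ)) /
            (Nat.factorial (n - k) : ℝ) : ℝ) : ℂ)
      else 0

/-!
Write `β = ‖β‖ u` with `‖u‖ = 1`. Up to the phase `conj u ^ n * u ^ m`, `⟨m|D(β)|n⟩` equals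
`exp (-‖β‖² / 2) √(n! m!) A(-‖β‖, ‖β‖, n, m)`, where `A(a, b, n, m)` is the coefficient of
`x ^ n y ^ m` in `exp (a x + b y + x y)`, and the weight `e^{μ(m - n)}` is absorbed by rescaling
`a ↦ e^{-μ} a`, `b ↦ e^{μ} b`. For arbitrary real `a, b`, expanding `A²` as a double sum over the
intermediate level and summing over `m` with the Vandermonde identity gives
`∑ₘ n! m! A(a, b, n, m)² = e^{b²} ∑ᵢ C(n, i) (a + b)^{2(n - i)} / (n - i)! = e^{b²} Lₙ(-(a + b)²)`,
the sums over the intermediate level collapsing by the binomial theorem.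
-/

open Finset
open scoped Nat

lemma pow_add_mul_pow_add_of_mul_eq_one {M : Type*} [CommMonoid M] {t s : M} (h : t * s = 1)
    (k j l : ℕ) : t ^ (k + j) * s ^ (j + l) = t ^ k * s ^ l := by
  calc t ^ (k + j) * s ^ (j + l) = t ^ k * s ^ l * (t * s) ^ j := by
        rw [mul_pow, pow_add, pow_add]
        ac_rfl
    _ = t ^ k * s ^ l := by rw [h, one_pow, mul_one]

-- The coefficient of `x ^ m` in `x ^ j * exp (b * x)`.
noncomputable def shiftExp (b : ℝ) (j m : ℕ) : ℝ :=
  if j ≤ m then b ^ (m - j) / (m - j)! else 0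

lemma hasSum_shiftExp (b : ℝ) (j : ℕ) : HasSum (shiftExp b j) (Real.exp b) := by
  rw [← hasSum_nat_add_iff' j]
  have hzero : ∑ i ∈ range j, shiftExp b j i = 0 :=
    sum_eq_zero fun i hi => if_neg (by simp at hi; omega)
  rw [hzero, sub_zero]
  simpa [shiftExp, Real.exp_eq_exp_ℝ] using NormedSpace.expSeries_div_hasSum_exp b

lemma factorial_mul_shiftExp_mul_shiftExp (b : ℝ) (j j' m : ℕ) :
    m ! * shiftExp b j m * shiftExp b j' m =
      if j' ≤ m then (m.choose j * j ! : ℝ) * b ^ (m - j) * b ^ (m - j') / (m - j')! else 0 := by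
  unfold shiftExp
  by_cases hj' : j' ≤ m
  · by_cases hj : j ≤ m
    · rw [if_pos hj, if_pos hj', if_pos hj', Nat.cast_choose ℝ hj]
      field_simp
    · simp [hj, hj', Nat.choose_eq_zero_of_lt (not_le.mp hj)]
  · simp [hj']

lemma choose_mul_shiftExp_eq (b : ℝ) {i j : ℕ} (j' p : ℕ) (hij : i ≤ j) :
    (j'.choose i * p.choose (j - i) * j ! : ℝ) * b ^ (j' + p - j) * b ^ p / p ! =
      j.choose i * j'.choose i * i ! * b ^ (j - i) * b ^ (j' - i) *
        shiftExp (b ^ 2) (j + j' - i) (j' + p) := by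
  obtain ⟨d, rfl⟩ := Nat.exists_eq_add_of_le hij
  by_cases hi' : i ≤ j'
  swap
  · simp [Nat.choose_eq_zero_of_lt (not_le.mp hi')]
  obtain ⟨c, rfl⟩ := Nat.exists_eq_add_of_le hi'
  by_cases hdp : d ≤ p
  swap
  · simp [shiftExp, Nat.choose_eq_zero_of_lt (not_le.mp hdp)]
    omega
  obtain ⟨e, rfl⟩ := Nat.exists_eq_add_of_le hdp
  have h1 : i + c + (d + e) - (i + d) = c + e := by omega
  have h2 : i + d - i = d := by omega
  have h3 : i + c - i = c := by omega
  have h4 : i + d + (i + c) - i ≤ i + c + (d + e) := by omega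
  have h5 : i + c + (d + e) - (i + d + (i + c) - i) = e := by omega
  simp only [shiftExp, h1, h2, h3, if_pos h4, h5, Nat.cast_add_choose]
  field_simp
  ring

lemma factorial_mul_shiftExp_mul_shiftExp_eq_sum (b : ℝ) (j j' m : ℕ) :
    m ! * shiftExp b j m * shiftExp b j' m =
      ∑ i ∈ range (j + 1), j.choose i * j'.choose i * i ! * b ^ (j - i) * b ^ (j' - i) *
        shiftExp (b ^ 2) (j + j' - i) m := by
  rw [factorial_mul_shiftExp_mul_shiftExp]
  split_ifs with hj'
  · obtain ⟨p, rfl⟩ := Nat.exists_eq_add_of_le hj'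
    have hvandermonde : ((j' + p).choose j : ℝ) =
        ∑ i ∈ range (j + 1), (j'.choose i * p.choose (j - i) : ℝ) := by
      rw [Nat.add_choose_eq, Finset.Nat.sum_antidiagonal_eq_sum_range_succ_mk]
      push_cast
      rfl
    rw [hvandermonde, Nat.add_sub_cancel_left, sum_mul, sum_mul, sum_mul, sum_div]
    refine sum_congr rfl fun i hi => ?_
    rw [← choose_mul_shiftExp_eq b j' p (by simpa [Nat.lt_succ_iff] using hi)]
  · refine (sum_eq_zero fun i hi => ?_).symm
    have : ¬ j + j' - i ≤ m := by simp at hi; omega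
    simp [shiftExp, this]

lemma hasSum_factorial_mul_shiftExp_mul_shiftExp (b : ℝ) (j j' : ℕ) :
    HasSum (fun m => m ! * shiftExp b j m * shiftExp b j' m)
      (Real.exp (b ^ 2) * ∑ i ∈ range (j + 1),
        j.choose i * j'.choose i * i ! * b ^ (j - i) * b ^ (j' - i)) := by
  simp_rw [factorial_mul_shiftExp_mul_shiftExp_eq_sum, mul_sum]
  exact hasSum_sum fun i _ => by
    simpa only [mul_comm (Real.exp _)] using (hasSum_shiftExp (b ^ 2) _).mul_left _

lemma sum_choose_mul_pow (a b : ℝ) (n i : ℕ) :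
    ∑ k ∈ range (n + 1), a ^ k / (k ! * (n - k)!) * ((n - k).choose i * b ^ (n - k - i)) =
      n.choose i * (a + b) ^ (n - i) / n ! := by
  by_cases hin : i ≤ n
  swap
  · have hzero : ∀ k, (n - k).choose i = 0 := fun k => Nat.choose_eq_zero_of_lt (by omega)
    simp [hzero, Nat.choose_eq_zero_of_lt (not_le.mp hin)]
  obtain ⟨d, rfl⟩ := Nat.exists_eq_add_of_le' hin
  have htail : ∀ k ∈ range i, a ^ (d + 1 + k) / ((d + 1 + k)! * (d + i - (d + 1 + k))!) *
      ((d + i - (d + 1 + k)).choose i * b ^ (d + i - (d + 1 + k) - i)) = 0 := by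
    intro k hk
    rw [mem_range] at hk
    rw [Nat.choose_eq_zero_of_lt (by omega)]
    simp
  rw [show d + i + 1 = (d + 1) + i by ring, sum_range_add, sum_eq_zero htail, add_zero,
    add_pow, Nat.add_sub_cancel, mul_sum, sum_div]
  refine sum_congr rfl fun k hk => ?_
  have hk : k ≤ d := by simpa [Nat.lt_succ_iff] using hk
  obtain ⟨e, rfl⟩ := Nat.exists_eq_add_of_le hk
  have h1 : k + e + i - k = e + i := by omega
  have h2 : e + i - i = e := by omega
  have h3 : k + e - k = e := by omega
  rw [h1, h2, h3, Nat.cast_add_choose, Nat.cast_choose ℝ (Nat.le_add_left i e),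
    Nat.cast_choose ℝ (Nat.le_add_left i (k + e)), Nat.add_sub_cancel, Nat.add_sub_cancel]
  field_simp

-- The coefficient of `x ^ n * y ^ m` in `exp (a * x + b * y + x * y)`.
noncomputable def displacementAmp (a b : ℝ) (n m : ℕ) : ℝ :=
  ∑ k ∈ range (n + 1), a ^ k / (k ! * (n - k)!) * shiftExp b (n - k) m

lemma factorial_mul_sum_sum_eq_laguerre (a b : ℝ) (n : ℕ) :
    (n ! : ℝ) * ∑ k ∈ range (n + 1), ∑ k' ∈ range (n + 1),
        a ^ k / (k ! * (n - k)!) * (a ^ k' / (k' ! * (n - k')!)) *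
          ∑ i ∈ range (n - k + 1),
            (n - k).choose i * (n - k').choose i * i ! * b ^ (n - k - i) * b ^ (n - k' - i) =
      laguerre n (-(a + b) ^ 2) := by
  have hextend : ∀ k ∈ range (n + 1), ∀ k' : ℕ,
      ∑ i ∈ range (n - k + 1),
          ((n - k).choose i * (n - k').choose i * i ! * b ^ (n - k - i) * b ^ (n - k' - i) : ℝ) =
        ∑ i ∈ range (n + 1),
          i ! * (((n - k).choose i * b ^ (n - k - i)) * ((n - k').choose i * b ^ (n - k' - i))) := by
    intro k hk k'
    refine sum_subset (range_subset_range.mpr (by omega)) (fun i _ hi => ?_) |>.trans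
      (sum_congr rfl fun i _ => by ring)
    rw [Nat.choose_eq_zero_of_lt (by simp at hi; omega)]
    simp
  calc _ = (n ! : ℝ) * ∑ i ∈ range (n + 1), i ! *
        ((∑ k ∈ range (n + 1), a ^ k / (k ! * (n - k)!) * ((n - k).choose i * b ^ (n - k - i))) *
          ∑ k' ∈ range (n + 1), a ^ k' / (k' ! * (n - k')!) *
            ((n - k').choose i * b ^ (n - k' - i))) := by
        congr 1
        rw [sum_congr rfl fun k hk => sum_congr rfl fun k' _ => by rw [hextend k hk k']]
        simp_rw [sum_mul_sum, mul_sum]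
        symm
        rw [sum_comm]
        refine sum_congr rfl fun k _ => ?_
        rw [sum_comm]
        exact sum_congr rfl fun k' _ => sum_congr rfl fun i _ => by ring
    _ = ∑ i ∈ range (n + 1), (n.choose i : ℝ) * ((a + b) ^ 2) ^ (n - i) / (n - i)! := by
        simp_rw [sum_choose_mul_pow, mul_sum]
        generalize a + b = c
        refine sum_congr rfl fun i hi => ?_
        have hi : i ≤ n := by simpa [Nat.lt_succ_iff] using hi
        rw [Nat.cast_choose ℝ hi]
        field_simp
        ring
    _ = laguerre n (-(a + b) ^ 2) := by
        rw [laguerre, ← sum_range_reflect]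
        refine sum_congr rfl fun k hk => ?_
        have hk : k ≤ n := by simpa [Nat.lt_succ_iff] using hk
        rw [Nat.add_sub_cancel, Nat.sub_sub_self hk, Nat.choose_symm hk]
        ring

theorem hasSum_factorial_mul_factorial_mul_displacementAmp_sq (a b : ℝ) (n : ℕ) :
    HasSum (fun m => (n ! * m ! : ℝ) * displacementAmp a b n m ^ 2)
      (Real.exp (b ^ 2) * laguerre n (-(a + b) ^ 2)) := by
  have hexpand : ∀ m, (n ! * m ! : ℝ) * displacementAmp a b n m ^ 2 =
      n ! * ∑ k ∈ range (n + 1), ∑ k' ∈ range (n + 1),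
        a ^ k / (k ! * (n - k)!) * (a ^ k' / (k' ! * (n - k')!)) *
          (m ! * shiftExp b (n - k) m * shiftExp b (n - k') m) := by
    intro m
    rw [displacementAmp, sq, sum_mul_sum, mul_assoc, mul_sum]
    congr 1
    refine sum_congr rfl fun k _ => ?_
    rw [mul_sum]
    exact sum_congr rfl fun k' _ => by ring
  rw [← factorial_mul_sum_sum_eq_laguerre, mul_left_comm]
  simp_rw [hexpand]
  refine .mul_left _ ?_
  rw [mul_sum]
  refine hasSum_sum fun k _ => ?_
  rw [mul_sum]
  refine hasSum_sum fun k' _ => ?_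
  rw [mul_left_comm]
  exact (hasSum_factorial_mul_shiftExp_mul_shiftExp b (n - k) (n - k')).mul_left _

lemma Dmat_eq_phase_mul (β : ℂ) (m n : ℕ) :
    Dmat β m n = (starRingEnd ℂ) (Complex.exp (β.arg * Complex.I)) ^ n *
      Complex.exp (β.arg * Complex.I) ^ m *
        ((Real.exp (-‖β‖ ^ 2 / 2) * √((n ! : ℝ) * m !) *
          displacementAmp (-‖β‖) ‖β‖ n m : ℝ) : ℂ) := by
  set u := Complex.exp (β.arg * Complex.I)
  have hu : (starRingEnd ℂ) u * u = 1 := by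
    rw [mul_comm, Complex.mul_conj, Complex.normSq_eq_norm_sq, Complex.norm_exp_ofReal_mul_I]
    simp
  have hβ : β = ‖β‖ * u := (Complex.norm_mul_exp_arg_mul_I β).symm
  unfold Dmat displacementAmp shiftExp
  push_cast
  simp only [mul_sum]
  refine sum_congr rfl fun k hk => ?_
  split_ifs with hkm
  swap
  · simp
  obtain ⟨j, rfl⟩ := Nat.exists_eq_add_of_le (show k ≤ n by simpa [Nat.lt_succ_iff] using hk)
  rw [Nat.add_sub_cancel_left] at hkm ⊢
  obtain ⟨l, rfl⟩ := Nat.exists_eq_add_of_le hkm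
  rw [Nat.add_sub_cancel_left, pow_add_mul_pow_add_of_mul_eq_one hu]
  clear_value u
  generalize ‖β‖ = r at hβ ⊢
  subst hβ
  rw [map_mul, Complex.conj_ofReal]
  push_cast
  ring

lemma norm_Dmat_sq (β : ℂ) (m n : ℕ) :
    ‖Dmat β m n‖ ^ 2 =
      Real.exp (-‖β‖ ^ 2) * (n ! * m ! * displacementAmp (-‖β‖) ‖β‖ n m ^ 2) := by
  rw [Dmat_eq_phase_mul, norm_mul, norm_mul, norm_pow, norm_pow, Complex.norm_conj,
    Complex.norm_exp_ofReal_mul_I, one_pow, one_pow, one_mul, one_mul, Complex.norm_real,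
    Real.norm_eq_abs, sq_abs, mul_pow, mul_pow, Real.sq_sqrt (by positivity), ← Real.exp_nat_mul]
  ring_nf

lemma displacementAmp_mul_mul {t s : ℝ} (hts : t * s = 1) (a b : ℝ) (n m : ℕ) :
    displacementAmp (t * a) (s * b) n m = t ^ n * s ^ m * displacementAmp a b n m := by
  unfold displacementAmp shiftExp
  rw [mul_sum]
  refine sum_congr rfl fun k hk => ?_
  split_ifs with hkm
  swap
  · simp
  obtain ⟨j, rfl⟩ := Nat.exists_eq_add_of_le (show k ≤ n by simpa [Nat.lt_succ_iff] using hk)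
  rw [Nat.add_sub_cancel_left] at hkm ⊢
  obtain ⟨l, rfl⟩ := Nat.exists_eq_add_of_le hkm
  rw [Nat.add_sub_cancel_left, pow_add_mul_pow_add_of_mul_eq_one hts]
  ring

/-- For any β ∈ ℂ, μ ∈ ℝ, n ∈ ℕ:
∑_m e^{2μ(m−n)}|⟨m|D(β)|n⟩|² = e^{(e^{2μ}−1)|β|²}·L_n(−|β|²(e^μ − e^{−μ})²). -/
theorem stmt3 (β : ℂ) (μ : ℝ) (n : ℕ) :
    ∑' m : ℕ, Real.exp (2 * μ * ((m : ℝ) - (n : ℝ))) * ‖Dmat β m n‖ ^ 2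
      = Real.exp ((Real.exp (2 * μ) - 1) * ‖β‖ ^ 2) *
        laguerre n (-‖β‖ ^ 2 * (Real.exp μ - Real.exp (-μ)) ^ 2) := by
  have hμ : Real.exp (-μ) * Real.exp μ = 1 := by rw [← Real.exp_add, neg_add_cancel, Real.exp_zero]
  have hsummand : ∀ m : ℕ, Real.exp (2 * μ * ((m : ℝ) - (n : ℝ))) * ‖Dmat β m n‖ ^ 2 =
      Real.exp (-‖β‖ ^ 2) * (n ! * m ! *
        displacementAmp (Real.exp (-μ) * -‖β‖) (Real.exp μ * ‖β‖) n m ^ 2) := by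
    intro m
    have hweight : (Real.exp (-μ) ^ n * Real.exp μ ^ m) ^ 2 = Real.exp (2 * μ * (m - n)) := by
      rw [← Real.exp_nat_mul, ← Real.exp_nat_mul, ← Real.exp_add, ← Real.exp_nat_mul]
      ring_nf
    rw [norm_Dmat_sq, displacementAmp_mul_mul hμ, mul_pow, hweight]
    ring
  have hexp2 : Real.exp (2 * μ) = Real.exp μ ^ 2 := by rw [← Real.exp_nat_mul]; norm_num
  rw [tsum_congr hsummand,
    ((hasSum_factorial_mul_factorial_mul_displacementAmp_sq _ _ n).mul_left _).tsum_eq, hexp2,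
    ← mul_assoc, ← Real.exp_add]
  congr 2 <;> ring
end

section
/- Let Λ ⊂ ℤ^D with graph metric ‖x−y‖ = ∑|x_i−y_i|, and let M_Λ be the set of finitely supported functions m: Λ → ℕ. For x ∈ Λ and m, ξ ∈ M_Λ define R_{m|ξ}(x) = max{ ‖u−x‖ : m(u) > 0 and m(u) ≠ ξ(u) } (with max over the empty set equal to 0), and Υ(x,m; y,ξ) = max{ ‖x−y‖, R_{m|ξ}(x), R_{ξ|m}(y) }. Then Υ is a pseudo-metric on Λ × M_Λ, and Υ(x,m;y,ξ) = 0 if and only if x = y and m(w) = ξ(w) for all w ≠ x. -/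
/-- The graph (ℓ¹) metric on ℤ^D: ‖x − y‖ = ∑_i |x_i − y_i|. -/
def latDist {D : ℕ} (x y : Fin D → ℤ) : ℕ := ∑ i, (x i - y i).natAbs

/-- R_{m|ξ}(x): the radius of the smallest ball centered at x containing all
sites u with m(u) > 0 and m(u) ≠ ξ(u) (0 if there are no such sites). -/
noncomputable def Rrad {D : ℕ} {Λ : Set (Fin D → ℤ)} (m ξ : Λ → ℕ) (x : Λ) : ℕ :=
  sSup {r : ℕ | ∃ u : Λ, 0 < m u ∧ m u ≠ ξ u ∧ r = latDist (u : Fin D → ℤ) (x : Fin D → ℤ)}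

/-- Υ(x,m; y,ξ) = max{‖x−y‖, R_{m|ξ}(x), R_{ξ|m}(y)}. -/
noncomputable def Ups {D : ℕ} {Λ : Set (Fin D → ℤ)} (x : Λ) (m : Λ → ℕ) (y : Λ) (ξ : Λ → ℕ) : ℕ :=
  max (max (latDist (x : Fin D → ℤ) (y : Fin D → ℤ)) (Rrad m ξ x)) (Rrad ξ m y)

lemma latDist_self {D : ℕ} (x : Fin D → ℤ) : latDist x x = 0 := by
  simp [latDist]

lemma latDist_comm {D : ℕ} (x y : Fin D → ℤ) : latDist x y = latDist y x := by
  unfold latDist; congr 1; funext i; omega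

lemma latDist_triangle {D : ℕ} (x y z : Fin D → ℤ) :
    latDist x z ≤ latDist x y + latDist y z := by
  unfold latDist
  rw [← Finset.sum_add_distrib]
  refine Finset.sum_le_sum fun i _ => ?_
  have : x i - z i = (x i - y i) + (y i - z i) := by ring
  rw [this]; exact Int.natAbs_add_le _ _

lemma eq_of_latDist_zero {D : ℕ} {x y : Fin D → ℤ} (h : latDist x y = 0) : x = y := by
  funext i
  have := Finset.sum_eq_zero_iff.mp h i (Finset.mem_univ i)
  omega

lemma Rrad_le {D : ℕ} {Λ : Set (Fin D → ℤ)} {m ξ : Λ → ℕ} {x : Λ} {n : ℕ}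
    (h : ∀ u : Λ, 0 < m u → m u ≠ ξ u → latDist (u : Fin D → ℤ) x ≤ n) :
    Rrad m ξ x ≤ n := by
  refine csSup_le' ?_
  rintro r ⟨u, hu1, hu2, rfl⟩
  exact h u hu1 hu2

lemma le_Rrad {D : ℕ} {Λ : Set (Fin D → ℤ)} {m ξ : Λ → ℕ} {x u : Λ}
    (hm : (Function.support m).Finite) (hu1 : 0 < m u) (hu2 : m u ≠ ξ u) :
    latDist (u : Fin D → ℤ) x ≤ Rrad m ξ x := by
  refine le_csSup ?_ ⟨u, hu1, hu2, rfl⟩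
  have hsub : {r : ℕ | ∃ u : Λ, 0 < m u ∧ m u ≠ ξ u ∧
      r = latDist (u : Fin D → ℤ) (x : Fin D → ℤ)} ⊆
      (fun u : Λ => latDist (u : Fin D → ℤ) (x : Fin D → ℤ)) '' (Function.support m) := by
    rintro r ⟨v, hv1, hv2, rfl⟩
    exact ⟨v, by simpa [Function.mem_support] using hv1.ne', rfl⟩
  exact ((hm.image _).subset hsub).bddAbove

lemma Rrad_comm {D : ℕ} {Λ : Set (Fin D → ℤ)} (m : Λ → ℕ) (x : Λ) :
    Rrad m m x = 0 := by
  have : Rrad m m x ≤ 0 := Rrad_le fun u _ h => absurd rfl h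
  omega

/-- Υ is a pseudo-metric on Λ × M_Λ (nonnegative, vanishing on the diagonal,
symmetric, triangle inequality), and Υ(x,m;y,ξ) = 0 iff x = y and m(w) = ξ(w)
for all w ≠ x.  Here M_Λ consists of the finitely supported m : Λ → ℕ. -/
theorem stmt8 (D : ℕ) (Λ : Set (Fin D → ℤ)) :
    (∀ (x y : Λ) (m ξ : Λ → ℕ), (Function.support m).Finite → (Function.support ξ).Finite →
      0 ≤ Ups x m y ξ) ∧
    (∀ (x : Λ) (m : Λ → ℕ), (Function.support m).Finite → Ups x m x m = 0) ∧
    (∀ (x y : Λ) (m ξ : Λ → ℕ), (Function.support m).Finite → (Function.support ξ).Finite →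
      Ups x m y ξ = Ups y ξ x m) ∧
    (∀ (x y z : Λ) (m ξ lam : Λ → ℕ), (Function.support m).Finite →
      (Function.support ξ).Finite → (Function.support lam).Finite →
      Ups x m z lam ≤ Ups x m y ξ + Ups y ξ z lam) ∧
    (∀ (x y : Λ) (m ξ : Λ → ℕ), (Function.support m).Finite → (Function.support ξ).Finite →
      (Ups x m y ξ = 0 ↔ x = y ∧ ∀ w : Λ, w ≠ x → m w = ξ w)) := by
  refine ⟨fun _ _ _ _ _ _ => Nat.zero_le _, ?_, ?_, ?_, ?_⟩
  · intro x m _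
    simp [Ups, latDist_self, Rrad_comm]
  · intro x y m ξ _ _
    simp only [Ups, latDist_comm (x : Fin D → ℤ) (y : Fin D → ℤ)]
    omega
  · intro x y z m ξ lam hm hξ hlam
    have h1 : latDist (x : Fin D → ℤ) (z : Fin D → ℤ) ≤ Ups x m y ξ + Ups y ξ z lam := by
      calc latDist (x : Fin D → ℤ) z
          ≤ latDist (x : Fin D → ℤ) y + latDist (y : Fin D → ℤ) z := latDist_triangle _ _ _
        _ ≤ Ups x m y ξ + Ups y ξ z lam := by
            unfold Ups; gcongr <;> omega
    have h2 : Rrad m lam x ≤ Ups x m y ξ + Ups y ξ z lam := by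
      refine Rrad_le fun u hu1 hu2 => ?_
      by_cases h : m u = ξ u
      · have d1 : latDist (u : Fin D → ℤ) y ≤ Rrad ξ lam y :=
          le_Rrad hξ (h ▸ hu1) (h ▸ hu2)
        calc latDist (u : Fin D → ℤ) x
            ≤ latDist (u : Fin D → ℤ) y + latDist (y : Fin D → ℤ) x := latDist_triangle _ _ _
          _ ≤ Ups y ξ z lam + Ups x m y ξ := by
              unfold Ups at *
              rw [latDist_comm (y : Fin D → ℤ) (x : Fin D → ℤ)]
              omega
          _ = Ups x m y ξ + Ups y ξ z lam := by omega
      · have := le_Rrad (x := x) hm hu1 h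
        unfold Ups at *; omega
    have h3 : Rrad lam m z ≤ Ups x m y ξ + Ups y ξ z lam := by
      refine Rrad_le fun u hu1 hu2 => ?_
      by_cases h : lam u = ξ u
      · have d1 : latDist (u : Fin D → ℤ) y ≤ Rrad ξ m y :=
          le_Rrad hξ (h ▸ hu1) (h ▸ hu2)
        calc latDist (u : Fin D → ℤ) z
            ≤ latDist (u : Fin D → ℤ) y + latDist (y : Fin D → ℤ) z := latDist_triangle _ _ _
          _ ≤ Ups x m y ξ + Ups y ξ z lam := by
              unfold Ups at *; omega
      · have := le_Rrad (x := z) hlam hu1 h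
        unfold Ups at *; omega
    unfold Ups at *; omega
  · intro x y m ξ hm hξ
    constructor
    · intro h
      have hd : latDist (x : Fin D → ℤ) y = 0 := by unfold Ups at h; omega
      have hxy : x = y := Subtype.ext (eq_of_latDist_zero hd)
      refine ⟨hxy, fun w hw => ?_⟩
      by_contra hne
      have hR1 : Rrad m ξ x = 0 := by unfold Ups at h; omega
      have hR2 : Rrad ξ m y = 0 := by unfold Ups at h; omega
      have hw' : (w : Fin D → ℤ) ≠ (x : Fin D → ℤ) := fun he => hw (Subtype.ext he)
      have hwd : 0 < latDist (w : Fin D → ℤ) x := by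
        rcases Nat.eq_zero_or_pos (latDist (w : Fin D → ℤ) x) with h0 | h0
        · exact absurd (eq_of_latDist_zero h0) hw'
        · exact h0
      have hm0 : m w = 0 := by
        by_contra hm0
        have := le_Rrad (x := x) hm (Nat.pos_of_ne_zero hm0) hne
        omega
      have hξ0 : ξ w = 0 := by
        by_contra hξ0
        have := le_Rrad (x := y) hξ (Nat.pos_of_ne_zero hξ0) (Ne.symm hne)
        have hwd' : 0 < latDist (w : Fin D → ℤ) y := hxy ▸ hwd
        omega
      exact hne (hm0.trans hξ0.symm)
    · rintro ⟨rfl, hall⟩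
      have hR1 : Rrad m ξ x ≤ 0 := Rrad_le fun u hu1 hu2 => by
        have hu : u = x := by
          by_contra h; exact hu2 (hall u h)
        simp [hu, latDist_self]
      have hR2 : Rrad ξ m x ≤ 0 := Rrad_le fun u hu1 hu2 => by
        have hu : u = x := by
          by_contra h; exact hu2 (hall u h).symm
        simp [hu, latDist_self]
      unfold Ups; simp [latDist_self]; omega
end
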